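/- For unit-range valuations the price of anarchy of any fair mechanism is Ω(n). Precisely: let n ≥ 3, m = n, and ε ∈ (0, 1/n²]. Define true unit-range valuations by: agent 1 has value 1 for each of items 1,…,n−1 and value 0 for item n; each agent i ≥ 2 has value 1 for item 1, value ε for each of items 2,…,n−1, and value 0 for item n. Then for every fair mechanism M and every reported profile v (equilibrium or not), the social welfare of the allocation p(v) under these true valuations is at most 3, while OPT = n − 1. Hence the price of anarchy of every fair mechanism under unit-range valuations is at least (n−1)/3. -/

import Mathlib

/-!
Each item is fully allocated and, by fairness with `m = n`, each agent receives exactly one item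
in expectation, so the allocation `p v` is a doubly stochastic matrix. The true value of agent `i`
for item `j` is at most `[i = 0] + [j = 0] + ε`, hence the welfare is at most
(row `0` of `p v`) + (column `0` of `p v`) + `ε n` `= 2 + ε n ≤ 3`. Meanwhile agent `0` alone
values each of the items `0, …, n − 2` at `1`.
-/

noncomputable section

/-- `p` is a randomized direct-revelation mechanism: on every reported profile it returns
nonnegative allocation probabilities, each item being fully allocated. -/
def IsMechanism (n m : ℕ) (p : (Fin n → Fin m → ℝ) → Fin n → Fin m → ℝ) : Prop :=
  ∀ v : Fin n → Fin m → ℝ, (∀ i j, 0 ≤ p v i j) ∧ (∀ j, ∑ i, p v i j = 1)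

/-- The mechanism is fair: every agent receives `m/n` items in expectation. -/
def IsFair (n m : ℕ) (p : (Fin n → Fin m → ℝ) → Fin n → Fin m → ℝ) : Prop :=
  ∀ (v : Fin n → Fin m → ℝ) (i : Fin n), ∑ j, p v i j = (m : ℝ) / (n : ℝ)

/-- A unit-range valuation: all values lie in `[0,1]`, with at least one item of value `1`
and at least one item of value `0`. -/
def IsUnitRange {m : ℕ} (w : Fin m → ℝ) : Prop :=
  (∀ j, w j ∈ Set.Icc (0 : ℝ) 1) ∧ (∃ j, w j = 1) ∧ (∃ j, w j = 0)

open Finset Matrix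

theorem IsFair.mem_doublyStochastic {n : ℕ} {p : (Fin n → Fin n → ℝ) → Fin n → Fin n → ℝ}
    (hmech : IsMechanism n n p) (hfair : IsFair n n p) (v : Fin n → Fin n → ℝ) :
    p v ∈ doublyStochastic ℝ (Fin n) := by
  refine mem_doublyStochastic_iff_sum.2 ⟨(hmech v).1, fun i => ?_, (hmech v).2⟩
  have hn : (n : ℝ) ≠ 0 := by exact_mod_cast i.pos.ne'
  rw [hfair v i, div_self hn]

theorem sum_mul_le_of_mem_doublyStochastic {ι : Type*} [Fintype ι] [DecidableEq ι]
    {M : Matrix ι ι ℝ} (hM : M ∈ doublyStochastic ℝ ι) {w : ι → ι → ℝ} {α β : ι → ℝ} {γ : ℝ}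
    (hw : ∀ i j, w i j ≤ α i + β j + γ) :
    ∑ i, ∑ j, M i j * w i j ≤ ∑ i, α i + ∑ j, β j + γ * Fintype.card ι :=
  calc ∑ i, ∑ j, M i j * w i j
      ≤ ∑ i, ∑ j, M i j * (α i + β j + γ) :=
        sum_le_sum fun i _ => sum_le_sum fun j _ =>
          mul_le_mul_of_nonneg_left (hw i j) (nonneg_of_mem_doublyStochastic hM)
    _ = ∑ i, α i + ∑ j, β j + γ * Fintype.card ι := by
        simp only [mul_add, sum_add_distrib]
        rw [sum_comm (f := fun i j => M i j * β j)]
        simp only [← sum_mul, ← mul_sum, sum_row_of_mem_doublyStochastic hM,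
          sum_col_of_mem_doublyStochastic hM]
        simp [mul_comm]

def lowerBoundValuation (n : ℕ) (ε : ℝ) (i j : Fin n) : ℝ :=
  if (i : ℕ) = 0 then (if (j : ℕ) < n - 1 then 1 else 0)
  else if (j : ℕ) = 0 then 1
  else if (j : ℕ) < n - 1 then ε else 0

section lowerBoundValuation

variable {n : ℕ} {ε : ℝ}

theorem lowerBoundValuation_mem_Icc (hε0 : 0 ≤ ε) (hε1 : ε ≤ 1) (i j : Fin n) :
    lowerBoundValuation n ε i j ∈ Set.Icc 0 1 := by
  unfold lowerBoundValuation
  split_ifs <;> constructor <;> linarith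

theorem lowerBoundValuation_isUnitRange (hn : 2 ≤ n) (hε0 : 0 ≤ ε) (hε1 : ε ≤ 1) (i : Fin n) :
    IsUnitRange (lowerBoundValuation n ε i) := by
  refine ⟨lowerBoundValuation_mem_Icc hε0 hε1 i, ⟨⟨0, by omega⟩, ?_⟩, ⟨⟨n - 1, by omega⟩, ?_⟩⟩ <;>
    unfold lowerBoundValuation <;> split_ifs <;> simp_all <;> omega

theorem lowerBoundValuation_le (hε0 : 0 ≤ ε) (i j : Fin n) :
    lowerBoundValuation n ε i j ≤
      (if (i : ℕ) = 0 then 1 else 0) + (if (j : ℕ) = 0 then 1 else 0) + ε := by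
  unfold lowerBoundValuation
  split_ifs <;> linarith

theorem iSup_lowerBoundValuation (hn : 0 < n) (hε1 : ε ≤ 1) (j : Fin n) :
    ⨆ i, lowerBoundValuation n ε i j = if (j : ℕ) < n - 1 then 1 else 0 := by
  have : Nonempty (Fin n) := ⟨⟨0, hn⟩⟩
  refine le_antisymm (ciSup_le fun i => ?_) ?_
  · unfold lowerBoundValuation
    split_ifs <;> first | linarith | omega
  · convert le_ciSup (Set.finite_range fun i => lowerBoundValuation n ε i j).bddAbove ⟨0, hn⟩
    simp [lowerBoundValuation]

theorem sum_iSup_lowerBoundValuation (hn : 0 < n) (hε1 : ε ≤ 1) :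
    ∑ j, ⨆ i, lowerBoundValuation n ε i j = n - 1 := by
  simp only [iSup_lowerBoundValuation hn hε1]
  rw [Fin.sum_univ_eq_sum_range (fun k => if k < n - 1 then (1 : ℝ) else 0), sum_boole]
  have : {k ∈ range n | k < n - 1} = range (n - 1) := by ext k; simp only [mem_filter, mem_range]; omega
  simp [this, Nat.cast_sub hn]

end lowerBoundValuation

theorem Fin.sum_ite_val_eq_zero {n : ℕ} (hn : 0 < n) :
    ∑ i : Fin n, (if (i : ℕ) = 0 then (1 : ℝ) else 0) = 1 := by
  rw [Fin.sum_univ_eq_sum_range (fun k => if k = 0 then (1 : ℝ) else 0), sum_ite_eq']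
  simp [hn]

theorem welfare_lowerBoundValuation_le {n : ℕ} (hn : 0 < n) {ε : ℝ} (hε0 : 0 ≤ ε)
    {M : Matrix (Fin n) (Fin n) ℝ} (hM : M ∈ doublyStochastic ℝ (Fin n)) :
    ∑ i, ∑ j, M i j * lowerBoundValuation n ε i j ≤ 2 + ε * n := by
  have h := sum_mul_le_of_mem_doublyStochastic hM (lowerBoundValuation_le hε0)
  rwa [Fin.sum_ite_val_eq_zero hn, Fintype.card_fin, one_add_one_eq_two] at h

/-- **For unit-range valuations the price of anarchy of any fair mechanism is `Ω(n)`.**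
With `n ≥ 3` agents, `m = n` items, `ε ∈ (0, 1/n²]`, and the unit-range true valuations
`v'` (agent `0` values items `0,…,n−2` at `1` and item `n−1` at `0`; each agent `i ≥ 1`
values item `0` at `1`, items `1,…,n−2` at `ε`, and item `n−1` at `0`), for every fair
mechanism `p` and every reported profile `v` (equilibrium or not) the social welfare of
the allocation `p v` under `v'` is at most `3`, while `OPT(v') = n − 1`. -/
theorem unit_range_fair_poa_lower (n : ℕ) (hn : 3 ≤ n)
    (ε : ℝ) (hε0 : 0 < ε) (hε1 : ε ≤ 1 / (n : ℝ) ^ 2)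
    (p : (Fin n → Fin n → ℝ) → Fin n → Fin n → ℝ)
    (hmech : IsMechanism n n p) (hfair : IsFair n n p)
    (v' : Fin n → Fin n → ℝ)
    (hv' : ∀ i j, v' i j =
      if (i : ℕ) = 0 then (if (j : ℕ) < n - 1 then 1 else 0)
      else if (j : ℕ) = 0 then 1
      else if (j : ℕ) < n - 1 then ε else 0) :
    (∀ i, IsUnitRange (v' i)) ∧
    (∀ v : Fin n → Fin n → ℝ, ∑ i, ∑ j, p v i j * v' i j ≤ 3) ∧
    (∑ j, ⨆ i, v' i j) = (n : ℝ) - 1 := by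
  obtain rfl : v' = lowerBoundValuation n ε := funext₂ hv'
  have hn3 : (3 : ℝ) ≤ n := by exact_mod_cast hn
  have hεn : ε * n ≤ 1 :=
    calc ε * n ≤ 1 / (n : ℝ) ^ 2 * n := by gcongr
      _ = 1 / n := by field_simp
      _ ≤ 1 := by rw [div_le_one] <;> linarith
  have hε1' : ε ≤ 1 := by nlinarith
  refine ⟨lowerBoundValuation_isUnitRange (by omega) hε0.le hε1', fun v => ?_,
    sum_iSup_lowerBoundValuation (by omega) hε1'⟩
  have := welfare_lowerBoundValuation_le (by omega) hε0.le
    (IsFair.mem_doublyStochastic hmech hfair v)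
  linarith
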